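/- Let n ≥ 2, m ≥ n, and 1 ≤ i < j ≤ n with j − i ≤ m − n and m < 2n + 2. Then √(I_m^i + I_m^j) = ⋂_{u=0}^{m−n−(j−i)} L_{j+u, m−j−u+1, 2}, the ideals L_{j+u, m−j−u+1, 2} (0 ≤ u ≤ m−n−(j−i)) are prime, and none of them contains another; consequently Z_m^i ∩ Z_m^j = ⋃_{u=0}^{m−n−(j−i)} V(L_{j+u, m−j−u+1, 2}) is the irreducible decomposition of Z_m^i ∩ Z_m^j. -/

import Mathlib

noncomputable section

open MvPolynomial

/-- `R N = ℂ[x_0,…,x_N, y_0,…,y_N, z_0,…,z_N]`. -/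
abbrev R (N : ℕ) : Type := MvPolynomial (Fin 3 × Fin (N + 1)) ℂ

/-- the variable `x_i` (for `i ≤ N`). -/
def Xv (N i : ℕ) : R N := if h : i < N + 1 then X (0, ⟨i, h⟩) else 0
/-- the variable `y_i` (for `i ≤ N`). -/
def Yv (N i : ℕ) : R N := if h : i < N + 1 then X (1, ⟨i, h⟩) else 0
/-- the variable `z_i` (for `i ≤ N`). -/
def Zv (N i : ℕ) : R N := if h : i < N + 1 then X (2, ⟨i, h⟩) else 0

/-- `Σ_{i=p}^N x_i t^i`. -/
def xSer (N p : ℕ) : Polynomial (R N) :=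
  ∑ i ∈ Finset.Icc p N, Polynomial.C (Xv N i) * Polynomial.X ^ i
/-- `Σ_{i=q}^N y_i t^i`. -/
def ySer (N q : ℕ) : Polynomial (R N) :=
  ∑ i ∈ Finset.Icc q N, Polynomial.C (Yv N i) * Polynomial.X ^ i
/-- `Σ_{i=r}^N z_i t^i`. -/
def zSer (N r : ℕ) : Polynomial (R N) :=
  ∑ i ∈ Finset.Icc r N, Polynomial.C (Zv N i) * Polynomial.X ^ i

/-- `f_{pqr}^{(j)}`: the coefficient of `t^j` in
`f(Σ_{i=p}^N x_i t^i, Σ_{i=q}^N y_i t^i, Σ_{i=r}^N z_i t^i)` where `f = xy - z^{n+1}`. -/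
def fpqr (N n p q r j : ℕ) : R N :=
  (xSer N p * ySer N q - zSer N r ^ (n + 1)).coeff j


/-- The ideal `L_{pqr} = ⟨x_0,…,x_{p−1}, y_0,…,y_{q−1}, z_0,…,z_{r−1}⟩`. -/
def Lpqr (N p q r : ℕ) : Ideal (R N) :=
  Ideal.span ((Xv N '' Set.Iio p) ∪ (Yv N '' Set.Iio q) ∪ (Zv N '' Set.Iio r))

/-- The substitution `x_i ↦ x_{l+i}`, `y_i ↦ y_{e(n+1)−l+i}`, `z_i ↦ z_{e+i}`. -/
def shiftSub (N n l e : ℕ) : Fin 3 × Fin (N + 1) → R N := fun v =>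
  if v.1 = 0 then Xv N (l + (v.2 : ℕ))
  else if v.1 = 1 then Yv N (e * (n + 1) - l + (v.2 : ℕ))
  else Zv N (e + (v.2 : ℕ))

/-- `g_{l,e}^{(j)}`: obtained from `f^{(j)} = f_{000}^{(j)}` by the substitution
`x_i ↦ x_{l+i}`, `y_i ↦ y_{e(n+1)−l+i}`, `z_i ↦ z_{e+i}`. -/
def gle (N n l e j : ℕ) : R N := aeval (shiftSub N n l e) (fpqr N n 0 0 0 j)

/-- The ideal `⟨f^{(0)},…,f^{(m)}⟩` of `R_m`. -/
def Fideal (m n : ℕ) : Ideal (R m) :=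
  Ideal.span {g | ∃ j ≤ m, g = fpqr m n 0 0 0 j}

/-- `I_m^l = L_{l,n+1−l,1} + ⟨f^{(0)},…,f^{(m)}⟩`. -/
def Iml (m n l : ℕ) : Ideal (R m) := Lpqr m l (n + 1 - l) 1 ⊔ Fideal m n

/-- `G_m^l = ⟨g_{l,1}^{(0)},…,g_{l,1}^{(m−n−1)}⟩` (the zero ideal when `m = n`). -/
def Gml (m n l : ℕ) : Ideal (R m) :=
  Ideal.span {g | ∃ j < m - n, g = gle m n l 1 j}

/-- Points of `ℂ^{3(m+1)}`. -/
abbrev Pt (m : ℕ) := Fin 3 × Fin (m + 1) → ℂ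

/-- The zero locus in `ℂ^{3(m+1)}` of an ideal of `R_m`. -/
def zl (m : ℕ) (I : Ideal (R m)) : Set (Pt m) := {x | ∀ g ∈ I, eval x g = 0}

/-- `Z_m^l ⊆ ℂ^{3(m+1)}`, the zero locus of `I_m^l`. -/
def Zml (m n l : ℕ) : Set (Pt m) := zl m (Iml m n l)

/-- A subset of `ℂ^{3(m+1)}` is irreducible with respect to the Zariski topology,
whose closed sets are exactly the zero loci of ideals of `R_m`. -/
def IsIrredSet (m : ℕ) (S : Set (Pt m)) : Prop :=
  S.Nonempty ∧
    ∀ I₁ I₂ : Ideal (R m), S ⊆ zl m I₁ ∪ zl m I₂ → S ⊆ zl m I₁ ∨ S ⊆ zl m I₂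

/-!
A point of `Z_m^i ∩ Z_m^j` is a triple of arcs `x(t), y(t), z(t)` of degree `≤ m` with
`tʲ ∣ x`, `t^{n+1-i} ∣ y`, `t ∣ z` and `xy ≡ z^{n+1} mod t^{m+1}`. As `j + (n + 1 - i) ≥ n + 2`,
the coefficient of `t^{n+1}` gives `z₁^{n+1} = 0`, so `t² ∣ z` and `z^{n+1} ≡ 0 mod t^{2n+2}`,
hence modulo `t^{m+1}`. What remains, `t^{m+1} ∣ xy`, says that the `t`-orders of `x` and `y`
add up to at least `m + 1`, which splits the locus into the linear subspaces
`V(L_{j+u, m-j-u+1, 2})`. Their ideals are generated by variables, hence prime, and the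
Nullstellensatz turns this decomposition into the statements about the radical and irreducibility.
-/

theorem Prime.exists_pow_dvd_of_pow_dvd_mul {α : Type*} [CommMonoidWithZero α]
    [IsCancelMulZero α] {p x y : α} (hp : Prime p) {a b c : ℕ} (hx : p ^ a ∣ x)
    (hab : a + b ≤ c) (hxy : p ^ c ∣ x * y) (hy : p ^ b ∣ y) :
    ∃ s, a ≤ s ∧ s + b ≤ c ∧ p ^ s ∣ x ∧ p ^ (c - s) ∣ y := by
  by_cases hcb : p ^ (c - b) ∣ x
  · exact ⟨c - b, by omega, by omega, hcb, by rwa [Nat.sub_sub_self (by omega)]⟩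
  obtain ⟨s, hs⟩ := ENat.ne_top_iff_exists.1 (emultiplicity_lt_iff_not_dvd.2 hcb).ne_top
  have hsa : a ≤ s := by exact_mod_cast hs ▸ le_emultiplicity_of_pow_dvd hx
  have hsc : s < c - b := by exact_mod_cast hs ▸ emultiplicity_lt_iff_not_dvd.2 hcb
  refine ⟨s, hsa, by omega, pow_dvd_of_le_emultiplicity hs.le, pow_dvd_of_le_emultiplicity ?_⟩
  have hc : (c : ℕ∞) ≤ s + emultiplicity p y := by
    rw [hs, ← emultiplicity_mul hp]
    exact le_emultiplicity_of_pow_dvd hxy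
  revert hc
  induction emultiplicity p y using ENat.recTopCoe with
  | top => exact fun _ => le_top
  | coe t => intro hc; norm_cast at hc ⊢; omega

theorem Prime.sq_dvd_of_dvd_of_pow_succ_dvd_pow {α : Type*} [CommMonoidWithZero α]
    [IsCancelMulZero α] {p z : α} (hp : Prime p) {e : ℕ} (hz : p ∣ z)
    (hze : p ^ (e + 1) ∣ z ^ e) : p ^ 2 ∣ z := by
  obtain ⟨w, rfl⟩ := hz
  rw [mul_pow, pow_succ, mul_dvd_mul_iff_left (pow_ne_zero e hp.ne_zero)] at hze
  rw [sq]
  exact mul_dvd_mul_left p (hp.dvd_of_dvd_pow hze)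

namespace Polynomial

theorem pow_dvd_arc_iff {K : Type*} [CommRing K] [IsDomain K] {n m i j : ℕ}
    (hij : i < j) (hj : j ≤ n) (h1 : j - i ≤ m - n) (h2 : m < 2 * n + 2) (P Q Z : K[X]) :
    (X ^ j ∣ P ∧ X ^ (n + 1 - i) ∣ Q ∧ X ∣ Z ∧ X ^ (m + 1) ∣ P * Q - Z ^ (n + 1)) ↔
      ∃ u ≤ m - n - (j - i), X ^ (j + u) ∣ P ∧ X ^ (m - j - u + 1) ∣ Q ∧ X ^ 2 ∣ Z := by
  have hZpow : ∀ {k}, k ≤ 2 * (n + 1) → X ^ 2 ∣ Z → X ^ k ∣ Z ^ (n + 1) := fun hk hZ =>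
    (pow_dvd_pow X hk).trans (pow_mul (X : K[X]) 2 (n + 1) ▸ pow_dvd_pow_of_dvd hZ _)
  constructor
  · rintro ⟨hP, hQ, hZ, hF⟩
    have hPQ : X ^ (n + 2) ∣ P * Q :=
      (pow_dvd_pow X (by omega)).trans (pow_add (X : K[X]) _ _ ▸ mul_dvd_mul hP hQ)
    have hZ2 : X ^ 2 ∣ Z := prime_X.sq_dvd_of_dvd_of_pow_succ_dvd_pow hZ <|
      (dvd_sub_right hPQ).1 ((pow_dvd_pow X (by omega)).trans hF)
    have hPQm : X ^ (m + 1) ∣ P * Q := (dvd_sub_left (hZpow (by omega) hZ2)).1 hF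
    obtain ⟨s, hjs, hs, hPs, hQs⟩ := prime_X.exists_pow_dvd_of_pow_dvd_mul hP (by omega) hPQm hQ
    exact ⟨s - j, by omega, by rwa [Nat.add_sub_cancel' hjs],
      by rwa [show m - j - (s - j) + 1 = m + 1 - s by omega], hZ2⟩
  · rintro ⟨u, hu, hP, hQ, hZ2⟩
    refine ⟨(pow_dvd_pow X (by omega)).trans hP, (pow_dvd_pow X (by omega)).trans hQ,
      (dvd_pow_self X two_ne_zero).trans hZ2, dvd_sub ?_ (hZpow (by omega) hZ2)⟩
    rw [show m + 1 = j + u + (m - j - u + 1) by omega, pow_add]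
    exact mul_dvd_mul hP hQ

end Polynomial

namespace MvPolynomial

variable {σ R : Type*} [CommRing R]

theorem ker_aeval_indicator_compl_X (s : Set σ) :
    RingHom.ker (aeval (sᶜ.indicator X) : MvPolynomial σ R →ₐ[R] MvPolynomial σ R) =
      Ideal.span (X '' s) := by
  set φ : MvPolynomial σ R →ₐ[R] MvPolynomial σ R := aeval (sᶜ.indicator X)
  set mk := Ideal.Quotient.mkₐ R (Ideal.span (X '' s : Set (MvPolynomial σ R)))
  have hmk : mk.comp φ = mk := by
    refine algHom_ext fun v => ?_
    by_cases hv : v ∈ s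
    · have hX : X v ∈ Ideal.span (X '' s : Set (MvPolynomial σ R)) :=
        Ideal.subset_span ⟨v, hv, rfl⟩
      simp [φ, mk, hv, Ideal.Quotient.eq_zero_iff_mem.2 hX]
    · simp [φ, mk, hv]
  refine le_antisymm (fun g hg => ?_) (Ideal.span_le.2 ?_)
  · have := congrArg (· g) hmk
    simp only [AlgHom.comp_apply, RingHom.mem_ker.1 hg, map_zero] at this
    exact Ideal.Quotient.eq_zero_iff_mem.1 this.symm
  · rintro _ ⟨v, hv, rfl⟩
    simp [φ, hv]

theorem isPrime_span_X_image [IsDomain R] (s : Set σ) :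
    (Ideal.span (X '' s : Set (MvPolynomial σ R))).IsPrime :=
  ker_aeval_indicator_compl_X (R := R) s ▸ RingHom.ker_isPrime _

theorem X_mem_span_X_image_iff [Nontrivial R] {s : Set σ} {v : σ} :
    (X v : MvPolynomial σ R) ∈ Ideal.span (X '' s) ↔ v ∈ s := by
  simp only [mem_ideal_span_X_image, support_X, Finset.mem_singleton, forall_eq,
    Finsupp.single_apply_ne_zero]
  exact ⟨fun ⟨_, hv, h, _⟩ => h ▸ hv, fun hv => ⟨v, hv, rfl, one_ne_zero⟩⟩

end MvPolynomial

section ZeroLocus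

variable {m : ℕ}

theorem zl_eq_zeroLocus (I : Ideal (R m)) : zl m I = zeroLocus ℂ I := rfl

theorem mem_zl_span_iff {S : Set (R m)} {pt : Pt m} :
    pt ∈ zl m (Ideal.span S) ↔ ∀ g ∈ S, eval pt g = 0 :=
  Set.ext_iff.1 (zeroLocus_span S) pt

theorem zl_sup (I J : Ideal (R m)) : zl m (I ⊔ J) = zl m I ∩ zl m J :=
  zeroLocus_vanishingIdeal_galoisConnection.l_sup

theorem zl_subset_zl_iff {L I : Ideal (R m)} [L.IsPrime] : zl m L ⊆ zl m I ↔ I ≤ L :=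
  le_zeroLocus_iff_le_vanishingIdeal.trans <| by
    rw [zl_eq_zeroLocus, IsPrime.vanishingIdeal_zeroLocus]

theorem isIrredSet_zl {L : Ideal (R m)} [hL : L.IsPrime] (hne : (zl m L).Nonempty) :
    IsIrredSet m (zl m L) := by
  refine ⟨hne, fun I₁ I₂ hsub => ?_⟩
  simp only [zl_subset_zl_iff]
  refine hL.mul_le.1 (zl_subset_zl_iff.1 (hsub.trans (Set.union_subset ?_ ?_)))
  · exact zeroLocus_anti_mono Ideal.mul_le_left
  · exact zeroLocus_anti_mono Ideal.mul_le_right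

theorem radical_eq_iInf_of_zl_eq_biUnion {J : Ideal (R m)} {ι : Type*} (s : Finset ι)
    (L : ι → Ideal (R m)) (hL : ∀ u, (L u).IsPrime) (h : zl m J = ⋃ u ∈ s, zl m (L u)) :
    J.radical = ⨅ u ∈ s, L u := by
  rw [← vanishingIdeal_zeroLocus_eq_radical (K := ℂ), ← zl_eq_zeroLocus, h]
  refine (zeroLocus_vanishingIdeal_galoisConnection.u_iInf₂
    (f := fun u _ => zl m (L u))).trans ?_
  simp_rw [zl_eq_zeroLocus, IsPrime.vanishingIdeal_zeroLocus]

end ZeroLocus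

section Arcs

variable {N : ℕ}

theorem coeff_sum_Icc_zero {S : Type*} [Semiring S] (v : ℕ → S) (hv : ∀ a, N < a → v a = 0)
    (a : ℕ) : (∑ i ∈ Finset.Icc 0 N, Polynomial.C (v i) * Polynomial.X ^ i).coeff a = v a := by
  simp only [Polynomial.finsetSum_coeff, Polynomial.coeff_C_mul_X_pow, Finset.sum_ite_eq,
    Finset.mem_Icc, zero_le, true_and]
  split_ifs with ha
  · rfl
  · exact (hv a (not_le.1 ha)).symm

theorem coeff_xSer_zero (a : ℕ) : (xSer N 0).coeff a = Xv N a :=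
  coeff_sum_Icc_zero _ (fun _ ha => dif_neg (by omega)) a

theorem coeff_ySer_zero (a : ℕ) : (ySer N 0).coeff a = Yv N a :=
  coeff_sum_Icc_zero _ (fun _ ha => dif_neg (by omega)) a

theorem coeff_zSer_zero (a : ℕ) : (zSer N 0).coeff a = Zv N a :=
  coeff_sum_Icc_zero _ (fun _ ha => dif_neg (by omega)) a

-- `Xv N a = 0` for `a > N`, so only the indices `≤ N` contribute generators to `Lpqr`.
def lpqrVars (N p q r : ℕ) : Set (Fin 3 × Fin (N + 1)) :=
  {v | v.1 = 0 ∧ (v.2 : ℕ) < p ∨ v.1 = 1 ∧ (v.2 : ℕ) < q ∨ v.1 = 2 ∧ (v.2 : ℕ) < r}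

theorem Lpqr_eq_span_X (p q r : ℕ) : Lpqr N p q r = Ideal.span (X '' lpqrVars N p q r) := by
  refine le_antisymm (Ideal.span_le.2 ?_) (Ideal.span_le.2 ?_)
  · rintro _ ((⟨a, ha, rfl⟩ | ⟨a, ha, rfl⟩) | ⟨a, ha, rfl⟩) <;>
      simp only [Xv, Yv, Zv] <;> split_ifs with h <;>
      first
      | exact Ideal.zero_mem _
      | exact Ideal.subset_span ⟨_, by simpa [lpqrVars] using ha, rfl⟩
  · rintro _ ⟨⟨c, a, h⟩, hv, rfl⟩
    apply Ideal.subset_span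
    rcases hv with ⟨rfl, ha⟩ | ⟨rfl, ha⟩ | ⟨rfl, ha⟩
    · exact Or.inl (Or.inl ⟨a, ha, dif_pos h⟩)
    · exact Or.inl (Or.inr ⟨a, ha, dif_pos h⟩)
    · exact Or.inr ⟨a, ha, dif_pos h⟩

theorem Lpqr_isPrime (p q r : ℕ) : (Lpqr N p q r).IsPrime :=
  Lpqr_eq_span_X p q r ▸ isPrime_span_X_image _

theorem X_mem_Lpqr_iff {p q r : ℕ} {v : Fin 3 × Fin (N + 1)} :
    X v ∈ Lpqr N p q r ↔ v ∈ lpqrVars N p q r := by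
  rw [Lpqr_eq_span_X, X_mem_span_X_image_iff]

theorem not_Lpqr_le_of_lt_left {p q r p' q' r' : ℕ} (h : p' < p) (hp : p ≤ N + 1) :
    ¬ Lpqr N p q r ≤ Lpqr N p' q' r' := by
  intro hle
  have hmem : X (0, ⟨p - 1, by omega⟩) ∈ Lpqr N p q r :=
    X_mem_Lpqr_iff.2 (Or.inl ⟨rfl, by dsimp only; omega⟩)
  have := X_mem_Lpqr_iff.1 (hle hmem)
  simp [lpqrVars] at this
  omega

theorem not_Lpqr_le_of_lt_middle {p q r p' q' r' : ℕ} (h : q' < q) (hq : q ≤ N + 1) :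
    ¬ Lpqr N p q r ≤ Lpqr N p' q' r' := by
  intro hle
  have hmem : X (1, ⟨q - 1, by omega⟩) ∈ Lpqr N p q r :=
    X_mem_Lpqr_iff.2 (Or.inr (Or.inl ⟨rfl, by dsimp only; omega⟩))
  have := X_mem_Lpqr_iff.1 (hle hmem)
  simp [lpqrVars] at this
  omega

theorem zero_mem_zl_Lpqr (p q r : ℕ) : 0 ∈ zl N (Lpqr N p q r) := by
  rw [Lpqr_eq_span_X, mem_zl_span_iff]
  rintro _ ⟨v, -, rfl⟩
  simp

theorem mem_zl_Lpqr_iff {p q r : ℕ} {pt : Pt N} :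
    pt ∈ zl N (Lpqr N p q r) ↔
      Polynomial.X ^ p ∣ (xSer N 0).map (eval pt) ∧ Polynomial.X ^ q ∣ (ySer N 0).map (eval pt) ∧
        Polynomial.X ^ r ∣ (zSer N 0).map (eval pt) := by
  simp only [Lpqr, mem_zl_span_iff, Set.mem_union, or_imp, forall_and, Set.forall_mem_image,
    Set.mem_Iio, Polynomial.X_pow_dvd_iff, Polynomial.coeff_map, coeff_xSer_zero,
    coeff_ySer_zero, coeff_zSer_zero, and_assoc]

theorem mem_zl_Fideal_iff {n : ℕ} {pt : Pt N} :
    pt ∈ zl N (Fideal N n) ↔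
      Polynomial.X ^ (N + 1) ∣ (xSer N 0 * ySer N 0 - zSer N 0 ^ (n + 1)).map (eval pt) := by
  simp only [Fideal, mem_zl_span_iff, Set.mem_ofPred_eq, forall_exists_index, and_imp,
    Polynomial.X_pow_dvd_iff, Polynomial.coeff_map, fpqr, Nat.lt_succ_iff]
  exact ⟨fun h d hd => h _ d hd rfl, fun h _ d hd hg => hg ▸ h d hd⟩

theorem mem_Zml_iff {n l : ℕ} {pt : Pt N} :
    pt ∈ Zml N n l ↔
      Polynomial.X ^ l ∣ (xSer N 0).map (eval pt) ∧
        Polynomial.X ^ (n + 1 - l) ∣ (ySer N 0).map (eval pt) ∧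
        Polynomial.X ∣ (zSer N 0).map (eval pt) ∧
        Polynomial.X ^ (N + 1) ∣ (xSer N 0).map (eval pt) * (ySer N 0).map (eval pt) -
          (zSer N 0).map (eval pt) ^ (n + 1) := by
  rw [Zml, Iml, zl_sup, Set.mem_inter_iff, mem_zl_Lpqr_iff, mem_zl_Fideal_iff,
    Polynomial.map_sub, Polynomial.map_mul, Polynomial.map_pow, pow_one]
  simp only [and_assoc]

theorem Zml_inter_Zml {n i j : ℕ} (hij : i < j) (hj : j ≤ n) (h1 : j - i ≤ N - n)
    (h2 : N < 2 * n + 2) :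
    Zml N n i ∩ Zml N n j =
      ⋃ u ∈ Finset.range (N - n - (j - i) + 1), zl N (Lpqr N (j + u) (N - j - u + 1) 2) := by
  ext pt
  simp only [Set.mem_inter_iff, mem_Zml_iff, Set.mem_iUnion, Finset.mem_range, Nat.lt_succ_iff,
    exists_prop, mem_zl_Lpqr_iff]
  rw [← Polynomial.pow_dvd_arc_iff hij hj h1 h2]
  constructor
  · rintro ⟨⟨-, hQ, hZ, hF⟩, hP, -⟩
    exact ⟨hP, hQ, hZ, hF⟩
  · rintro ⟨hP, hQ, hZ, hF⟩
    exact ⟨⟨(pow_dvd_pow _ hij.le).trans hP, hQ, hZ, hF⟩, hP,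
      (pow_dvd_pow _ (by omega)).trans hQ, hZ, hF⟩

end Arcs

theorem stmt9_general (n m : ℕ) (i j : ℕ) (hij : i < j) (hj : j ≤ n)
    (h1 : j - i ≤ m - n) (h2 : m < 2 * n + 2) :
    (Iml m n i ⊔ Iml m n j).radical =
      (⨅ u ∈ Finset.range (m - n - (j - i) + 1), Lpqr m (j + u) (m - j - u + 1) 2) ∧
    (∀ u ≤ m - n - (j - i), (Lpqr m (j + u) (m - j - u + 1) 2).IsPrime) ∧
    (∀ u ≤ m - n - (j - i), ∀ v ≤ m - n - (j - i), u ≠ v →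
      ¬ Lpqr m (j + u) (m - j - u + 1) 2 ≤ Lpqr m (j + v) (m - j - v + 1) 2) ∧
    Zml m n i ∩ Zml m n j =
      (⋃ u ∈ Finset.range (m - n - (j - i) + 1), zl m (Lpqr m (j + u) (m - j - u + 1) 2)) ∧
    (∀ u ≤ m - n - (j - i), IsIrredSet m (zl m (Lpqr m (j + u) (m - j - u + 1) 2))) ∧
    (∀ u ≤ m - n - (j - i), ∀ v ≤ m - n - (j - i), u ≠ v →
      ¬ zl m (Lpqr m (j + u) (m - j - u + 1) 2) ⊆ zl m (Lpqr m (j + v) (m - j - v + 1) 2)) := by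
  have hL : ∀ u, (Lpqr m (j + u) (m - j - u + 1) 2).IsPrime := fun _ => Lpqr_isPrime _ _ _
  have hanti : ∀ u ≤ m - n - (j - i), ∀ v ≤ m - n - (j - i), u ≠ v →
      ¬ Lpqr m (j + u) (m - j - u + 1) 2 ≤ Lpqr m (j + v) (m - j - v + 1) 2 := by
    intro u hu v hv huv
    rcases huv.lt_or_gt with h | h
    · exact not_Lpqr_le_of_lt_middle (by omega) (by omega)
    · exact not_Lpqr_le_of_lt_left (by omega) (by omega)
  have hZ := Zml_inter_Zml hij hj h1 h2
  refine ⟨radical_eq_iInf_of_zl_eq_biUnion _ _ hL (by rw [zl_sup]; exact hZ), fun u _ => hL u,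
    hanti, hZ, fun u _ => isIrredSet_zl ⟨0, zero_mem_zl_Lpqr _ _ _⟩, ?_⟩
  intro u hu v hv huv
  rw [zl_subset_zl_iff]
  exact hanti v hv u hu huv.symm

theorem stmt9 (n m : ℕ) (hn : 2 ≤ n) (hm : n ≤ m) (i j : ℕ)
    (hi : 1 ≤ i) (hij : i < j) (hj : j ≤ n)
    (h1 : j - i ≤ m - n) (h2 : m < 2 * n + 2) :
    (Iml m n i ⊔ Iml m n j).radical =
      (⨅ u ∈ Finset.range (m - n - (j - i) + 1), Lpqr m (j + u) (m - j - u + 1) 2) ∧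
    (∀ u ≤ m - n - (j - i), (Lpqr m (j + u) (m - j - u + 1) 2).IsPrime) ∧
    (∀ u ≤ m - n - (j - i), ∀ v ≤ m - n - (j - i), u ≠ v →
      ¬ Lpqr m (j + u) (m - j - u + 1) 2 ≤ Lpqr m (j + v) (m - j - v + 1) 2) ∧
    Zml m n i ∩ Zml m n j =
      (⋃ u ∈ Finset.range (m - n - (j - i) + 1), zl m (Lpqr m (j + u) (m - j - u + 1) 2)) ∧
    (∀ u ≤ m - n - (j - i), IsIrredSet m (zl m (Lpqr m (j + u) (m - j - u + 1) 2))) ∧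
    (∀ u ≤ m - n - (j - i), ∀ v ≤ m - n - (j - i), u ≠ v →
      ¬ zl m (Lpqr m (j + u) (m - j - u + 1) 2) ⊆ zl m (Lpqr m (j + v) (m - j - v + 1) 2)) :=
  stmt9_general n m i j hij hj h1 h2
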